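/- Let V ⊆ L ⊆ W be subspaces of a finite-dimensional vector space W, and let ω be an antisymmetric bilinear form on W. Then sdim_{ω|_V}(V) ≤ sdim_{ω|_L}(L). That is, the symplectic dimension is weakly increasing with respect to inclusion of subspaces. -/
import Mathlib


open Module

noncomputable def resForm {k W : Type*} [Field k] [AddCommGroup W] [Module k W]
    (ω : W →ₗ[k] W →ₗ[k] k) (V : Submodule k W) : V →ₗ[k] V →ₗ[k] k :=
  ω.compl₁₂ V.subtype V.subtype

/-- dimension of `ker(ω|_V) = {v ∈ V : ω(v,u)=0 for all u ∈ V}` -/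
noncomputable def kerResDim (k : Type*) {W : Type*} [Field k] [AddCommGroup W] [Module k W]
    (ω : W →ₗ[k] W →ₗ[k] k) (V : Submodule k W) : ℕ :=
  Module.finrank k (LinearMap.ker (resForm ω V))

/-- symplectic dimension of the subspace `V` with the restricted form `ω|_V` -/
noncomputable def sdimRes {k W : Type*} [Field k] [AddCommGroup W] [Module k W]
    (ω : W →ₗ[k] W →ₗ[k] k) (V : Submodule k W) : ℚ :=
  ((Module.finrank k V : ℚ) - (kerResDim k ω V : ℚ)) / 2

/-- `V^∠ = {w ∈ W : ω(w,v) = 0 for all v ∈ V}` -/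
noncomputable def symPerp {k W : Type*} [Field k] [AddCommGroup W] [Module k W]
    (ω : W →ₗ[k] W →ₗ[k] k) (V : Submodule k W) : Submodule k W :=
  ⨅ v ∈ V, LinearMap.ker (ω.flip v)

lemma rank_sandwich {k A B C D : Type*} [Field k] [AddCommGroup A] [Module k A]
    [AddCommGroup B] [Module k B] [AddCommGroup C] [Module k C]
    [AddCommGroup D] [Module k D] [FiniteDimensional k C]
    (f : A →ₗ[k] B) (g : B →ₗ[k] C) (h : C →ₗ[k] D) :
    finrank k (LinearMap.range (h ∘ₗ g ∘ₗ f)) ≤ finrank k (LinearMap.range g) := by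
  have h1 : LinearMap.range (h ∘ₗ g ∘ₗ f) = Submodule.map h (LinearMap.range (g ∘ₗ f)) := by
    rw [LinearMap.range_comp]
  rw [h1]
  calc finrank k (Submodule.map h (LinearMap.range (g ∘ₗ f)))
      ≤ finrank k (LinearMap.range (g ∘ₗ f)) := Submodule.finrank_map_le h _
    _ ≤ finrank k (LinearMap.range g) := Submodule.finrank_mono (LinearMap.range_comp_le_range f g)

/-- symplectic dimension is weakly increasing with respect to
inclusion of subspaces. -/
theorem stmt6 {W : Type*} [AddCommGroup W] [Module ℂ W] [FiniteDimensional ℂ W]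
    (ω : W →ₗ[ℂ] W →ₗ[ℂ] ℂ)
    (hanti : ∀ x y, ω x y = - ω y x)
    (V L : Submodule ℂ W) (hVL : V ≤ L) :
    sdimRes ω V ≤ sdimRes ω L := by
  set i : V →ₗ[ℂ] L := Submodule.inclusion hVL
  have hfact : resForm ω V = ((i.lcomp ℂ ℂ) ∘ₗ (resForm ω L)) ∘ₗ i := by
    ext x y; rfl
  have hrank : finrank ℂ (LinearMap.range (resForm ω V))
      ≤ finrank ℂ (LinearMap.range (resForm ω L)) := by
    rw [hfact]
    exact rank_sandwich i (resForm ω L) (i.lcomp ℂ ℂ)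
  have hV := LinearMap.finrank_range_add_finrank_ker (resForm ω V)
  have hL := LinearMap.finrank_range_add_finrank_ker (resForm ω L)
  unfold sdimRes kerResDim
  rw [div_le_div_iff_of_pos_right (by norm_num), sub_le_sub_iff]
  have : (finrank ℂ V : ℚ) + finrank ℂ (LinearMap.ker (resForm ω L))
      = finrank ℂ (LinearMap.range (resForm ω V)) + finrank ℂ (LinearMap.ker (resForm ω V))
        + finrank ℂ (LinearMap.ker (resForm ω L)) := by
    rw [← hV]; push_cast; ring
  rw [this]
  have : (finrank ℂ L : ℚ) + finrank ℂ (LinearMap.ker (resForm ω V))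
      = finrank ℂ (LinearMap.range (resForm ω L)) + finrank ℂ (LinearMap.ker (resForm ω L))
        + finrank ℂ (LinearMap.ker (resForm ω V)) := by
    rw [← hL]; push_cast; ring
  rw [this]
  have : (finrank ℂ (LinearMap.range (resForm ω V)) : ℚ)
      ≤ finrank ℂ (LinearMap.range (resForm ω L)) := by exact_mod_cast hrank
  linarith
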